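/- arXiv:2305.12922 — 3 statements merged into one kernel-verified Lean document; each statement's English description precedes it below -/
import Mathlib

section
/- Let X ∈ ℝ^{m×n} and Λ ∈ ℝ^{n×n} diagonal with strictly positive diagonal entries. Then every diagonal entry of (XᵀX + Λ)⁻¹Λ is at most 1; equivalently, every diagonal entry of I − (XᵀX + Λ)⁻¹Λ = (XᵀX + Λ)⁻¹(XᵀX) is nonnegative. -/
/-!
Write `A = XᵀX + Λ`, which is positive definite, and let `v = A⁻¹ eⱼ` be the `j`-th column of
`A⁻¹`. Then `vᵀ A v = vⱼ = (A⁻¹)ⱼⱼ > 0`, while `vᵀ A v ≥ vᵀ Λ v ≥ λⱼ vⱼ²`. Hence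
`λⱼ (A⁻¹)ⱼⱼ² ≤ (A⁻¹)ⱼⱼ`, i.e. `((XᵀX + Λ)⁻¹ Λ)ⱼⱼ = (A⁻¹)ⱼⱼ λⱼ ≤ 1`.
-/

open Matrix

namespace Matrix

variable {n : Type*} [Fintype n] [DecidableEq n]

lemma one_sub_inv_add_mul_right_eq {R : Type*} [CommRing R] (S D : Matrix n n R)
    (h : IsUnit (S + D).det) : 1 - (S + D)⁻¹ * D = (S + D)⁻¹ * S := by
  rw [← nonsing_inv_mul (S + D) h, mul_add]
  abel

lemma PosSemidef.mul_sq_le_dotProduct_add_diagonal_mulVec {S : Matrix n n ℝ} (hS : S.PosSemidef)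
    {d : n → ℝ} (hd : ∀ k, 0 ≤ d k) (v : n → ℝ) (j : n) :
    d j * v j ^ 2 ≤ v ⬝ᵥ (S + diagonal d) *ᵥ v := by
  have hdiag : v ⬝ᵥ diagonal d *ᵥ v = ∑ k, d k * v k ^ 2 := by
    simp only [dotProduct, mulVec_diagonal]
    exact Finset.sum_congr rfl fun k _ => by ring
  calc d j * v j ^ 2 ≤ ∑ k, d k * v k ^ 2 :=
        Finset.single_le_sum (fun k _ => mul_nonneg (hd k) (sq_nonneg _)) (Finset.mem_univ j)
    _ ≤ v ⬝ᵥ S *ᵥ v + v ⬝ᵥ diagonal d *ᵥ v := by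
        rw [hdiag]; linarith [show 0 ≤ v ⬝ᵥ S *ᵥ v by simpa using hS.dotProduct_mulVec_nonneg v]
    _ = v ⬝ᵥ (S + diagonal d) *ᵥ v := by rw [add_mulVec, dotProduct_add]

lemma PosDef.mul_inv_apply_self_le_one {A : Matrix n n ℝ} (hA : A.PosDef) {c : ℝ} {j : n}
    (h : ∀ v, c * v j ^ 2 ≤ v ⬝ᵥ A *ᵥ v) : c * A⁻¹ j j ≤ 1 := by
  set v := A⁻¹ *ᵥ Pi.single j 1
  have hvj : v j = A⁻¹ j j := by simp [v, mulVec_single]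
  have hAv : A *ᵥ v = Pi.single j 1 := by
    rw [mulVec_mulVec, mul_nonsing_inv A ((isUnit_iff_isUnit_det A).1 hA.isUnit), one_mulVec]
  have hquad : v ⬝ᵥ A *ᵥ v = A⁻¹ j j := by simp [hAv, hvj]
  have hpos : 0 < A⁻¹ j j := hA.inv.diag_pos
  have hbound : c * A⁻¹ j j ^ 2 ≤ A⁻¹ j j := by simpa only [hquad, hvj] using h v
  nlinarith

end Matrix

/-- Let X ∈ ℝ^{m×n} and Λ diagonal with strictly positive diagonal entries. Then every
diagonal entry of (XᵀX + Λ)⁻¹Λ is at most 1; equivalently, every diagonal entry of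
I − (XᵀX + Λ)⁻¹Λ = (XᵀX + Λ)⁻¹(XᵀX) is nonnegative. -/
theorem stmt6 {m n : ℕ} (X : Matrix (Fin m) (Fin n) ℝ) (d : Fin n → ℝ)
    (hd : ∀ j, 0 < d j) :
    (∀ j, ((Xᵀ * X + Matrix.diagonal d)⁻¹ * Matrix.diagonal d) j j ≤ 1) ∧
      (1 : Matrix (Fin n) (Fin n) ℝ) - (Xᵀ * X + Matrix.diagonal d)⁻¹ * Matrix.diagonal d
        = (Xᵀ * X + Matrix.diagonal d)⁻¹ * (Xᵀ * X) ∧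
      (∀ j, 0 ≤ ((Xᵀ * X + Matrix.diagonal d)⁻¹ * (Xᵀ * X)) j j) := by
  have hS : (Xᵀ * X).PosSemidef := by
    simpa only [conjTranspose_eq_transpose_of_trivial] using posSemidef_conjTranspose_mul_self X
  have hA : (Xᵀ * X + diagonal d).PosDef :=
    PosDef.posSemidef_add hS (posDef_diagonal_iff.2 hd)
  have hle : ∀ j, ((Xᵀ * X + diagonal d)⁻¹ * diagonal d) j j ≤ 1 := fun j => by
    rw [mul_diagonal, mul_comm]
    exact hA.mul_inv_apply_self_le_one
      fun v => hS.mul_sq_le_dotProduct_add_diagonal_mulVec (fun k => (hd k).le) v j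
  have hsplit := one_sub_inv_add_mul_right_eq (Xᵀ * X) (diagonal d)
    ((isUnit_iff_isUnit_det _).1 hA.isUnit)
  refine ⟨hle, hsplit, fun j => ?_⟩
  rw [← hsplit, Matrix.sub_apply, one_apply_eq]
  linarith [hle j]
end

section
/- Let X ∈ ℝ^{m×n}, Λ ∈ ℝ^{n×n} diagonal with positive entries, P' = (XᵀX + Λ)⁻¹, ξ ≥ 1, and define μ_j = 0 if 1 − P'_{jj}Λ_{jj} ≤ ξ and μ_j = (1−ξ)/P'_{jj} − Λ_{jj} otherwise. Then μ = 0, i.e., the RDLAE solution (XᵀX + Λ)⁻¹(XᵀX − diagMat(μ)) equals the DLAE solution (XᵀX + Λ)⁻¹(XᵀX). -/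
open Matrix

theorem Matrix.PosDef.transpose_mul_self_add_diagonal {m n : Type*} [Fintype m] [Fintype n]
    [DecidableEq n] (X : Matrix m n ℝ) {d : n → ℝ} (hd : ∀ j, 0 < d j) :
    (Xᵀ * X + diagonal d).PosDef :=
  (PosDef.diagonal hd).posSemidef_add (by simpa using posSemidef_conjTranspose_mul_self X)

/-- (Theorem 1) With Λ = diag(d), d > 0, P' = (XᵀX + Λ)⁻¹, ξ ≥ 1 and
μⱼ = 0 if 1 − P'ⱼⱼΛⱼⱼ ≤ ξ else (1−ξ)/P'ⱼⱼ − Λⱼⱼ, we get μ = 0, so the RDLAE solution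
equals the DLAE solution (XᵀX + Λ)⁻¹(XᵀX). -/
theorem stmt13 {m n : ℕ} (X : Matrix (Fin m) (Fin n) ℝ) (d : Fin n → ℝ)
    (hd : ∀ j, 0 < d j) (P' : Matrix (Fin n) (Fin n) ℝ)
    (hP' : P' = (Xᵀ * X + Matrix.diagonal d)⁻¹)
    (ξ : ℝ) (hξ : 1 ≤ ξ) (μ : Fin n → ℝ)
    (hμ : ∀ j, μ j = if 1 - P' j j * d j ≤ ξ then 0 else (1 - ξ) / P' j j - d j) :
    μ = 0 ∧
      (Xᵀ * X + Matrix.diagonal d)⁻¹ * (Xᵀ * X - Matrix.diagonal μ)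
        = (Xᵀ * X + Matrix.diagonal d)⁻¹ * (Xᵀ * X) := by
  have hP : P'.PosDef := hP' ▸ (PosDef.transpose_mul_self_add_diagonal X hd).inv
  have hμ0 : μ = 0 := funext fun j => by
    have hbelow : 1 - P' j j * d j ≤ ξ := by linarith [mul_pos (hP.diag_pos (i := j)) (hd j)]
    rw [hμ j, if_pos hbelow, Pi.zero_apply]
  exact ⟨hμ0, by simp [hμ0]⟩
end

section
/- Let X ∈ ℝ^{m×n}, Λ ∈ ℝ^{n×n} diagonal with positive entries, P' = (XᵀX + Λ)⁻¹, and ξ = 0. With μ_j = 0 if 1 − P'_{jj}Λ_{jj} ≤ 0 and μ_j = 1/P'_{jj} − Λ_{jj} otherwise, the RDLAE solution B = (XᵀX + Λ)⁻¹(XᵀX − diagMat(μ)) has all diagonal entries ≤ 0, and in fact equals the EDLAE solution whose diagonal entries are exactly zero whenever P'_{jj}Λ_{jj} < 1. -/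
/-!
Write `A = XᵀX + Λ`. Since `A⁻¹ (XᵀX − diag μ) = 1 − A⁻¹ diag (d + μ)`, the `j`-th diagonal entry
of `B` is `1 − P'ⱼⱼ (dⱼ + μⱼ)`. The choice of `μⱼ` makes this `min (1 − P'ⱼⱼ dⱼ) 0`, as long as
`P'ⱼⱼ ≠ 0`; and `P'ⱼⱼ > 0` because `A`, hence `A⁻¹`, is positive definite.
-/

open Matrix

theorem Matrix.inv_add_diagonal_mul_sub_diagonal_apply_self {n R : Type*} [Fintype n]
    [DecidableEq n] [CommRing R] (A : Matrix n n R) (d μ : n → R)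
    (h : IsUnit (A + diagonal d).det) (j : n) :
    ((A + diagonal d)⁻¹ * (A - diagonal μ)) j j = 1 - (A + diagonal d)⁻¹ j j * (d j + μ j) := by
  have hsplit : A - diagonal μ = (A + diagonal d) - diagonal (d + μ) := by
    rw [show diagonal (d + μ) = diagonal d + diagonal μ from (diagonal_add d μ).symm]; abel
  rw [hsplit, Matrix.mul_sub, nonsing_inv_mul _ h, sub_apply, mul_diagonal, one_apply_eq,
    Pi.add_apply]

theorem one_sub_mul_add_ite_eq_min {p d : ℝ} (hp : p ≠ 0) :
    1 - p * (d + if 1 - p * d ≤ 0 then 0 else 1 / p - d) = min (1 - p * d) 0 := by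
  split_ifs with h
  · rw [add_zero, min_eq_left h]
  · rw [min_eq_right (le_of_not_ge h)]
    field_simp
    ring

/-- (Theorem 2) With Λ = diag(d), d > 0, P' = (XᵀX + Λ)⁻¹, ξ = 0 and
μⱼ = 0 if 1 − P'ⱼⱼΛⱼⱼ ≤ 0 else 1/P'ⱼⱼ − Λⱼⱼ, the RDLAE solution
B = (XᵀX + Λ)⁻¹(XᵀX − diagMat(μ)) has all diagonal entries ≤ 0, and its diagonal entries
are exactly zero whenever P'ⱼⱼΛⱼⱼ < 1. -/
theorem stmt14 {m n : ℕ} (X : Matrix (Fin m) (Fin n) ℝ) (d : Fin n → ℝ)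
    (hd : ∀ j, 0 < d j) (P' : Matrix (Fin n) (Fin n) ℝ)
    (hP' : P' = (Xᵀ * X + Matrix.diagonal d)⁻¹)
    (μ : Fin n → ℝ)
    (hμ : ∀ j, μ j = if 1 - P' j j * d j ≤ 0 then 0 else 1 / P' j j - d j)
    (B : Matrix (Fin n) (Fin n) ℝ)
    (hB : B = (Xᵀ * X + Matrix.diagonal d)⁻¹ * (Xᵀ * X - Matrix.diagonal μ)) :
    (∀ j, B j j ≤ 0) ∧ (∀ j, P' j j * d j < 1 → B j j = 0) := by
  have hA := PosDef.transpose_mul_self_add_diagonal X hd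
  have hP'_pos : ∀ j, 0 < P' j j := fun j => hP' ▸ hA.inv.diag_pos
  have hB_diag : ∀ j, B j j = min (1 - P' j j * d j) 0 := fun j => by
    rw [hB, inv_add_diagonal_mul_sub_diagonal_apply_self _ _ _ hA.det_pos.ne'.isUnit, ← hP',
      hμ, one_sub_mul_add_ite_eq_min (hP'_pos j).ne']
  refine ⟨fun j => hB_diag j ▸ min_le_right _ _, fun j hj => ?_⟩
  rw [hB_diag, min_eq_right (by linarith)]
end
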